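/- Let w = s_i s_{i±1} s_i · v' be an element of S_n with a reduced word of the form a = v s_i s_{i±1} s_i v' where ℓ(w) = ℓ(v) + ℓ(v') + 3 (i.e., w is not 321-avoiding). Then the mask σ that selects all letters of v, then the first s_i, deselects s_{i±1} and the second s_i, and selects all of v', satisfies |D^0(σ)| = 1 and has exactly 2 zeros; consequently Δ_σ < 0, i.e., |D(σ)| > (ℓ(w) − ℓ(π(w^σ)) − 1)/2. -/

import Mathlib

open Polynomial

/-- The simple transposition `s_i = (i, i+1)` (1-based) in `S_n`, acting on `Fin n`
(0-based positions `i-1` and `i`); equals `1` if `i` is out of range. -/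
def gen (n : ℕ) (i : ℕ) : Equiv.Perm (Fin n) :=
  if h : 1 ≤ i ∧ i < n then Equiv.swap ⟨i - 1, by omega⟩ ⟨i, h.2⟩ else 1

/-- Product of the word `l` of generator indices. -/
def wordProd (n : ℕ) (l : List ℕ) : Equiv.Perm (Fin n) :=
  (l.map (gen n)).prod

/-- Coxeter length of `w ∈ S_n`. -/
noncomputable def len (n : ℕ) (w : Equiv.Perm (Fin n)) : ℕ :=
  sInf {r | ∃ l : List ℕ, (∀ i ∈ l, 1 ≤ i ∧ i < n) ∧ wordProd n l = w ∧ l.length = r}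

/-- `l` is a reduced word for `w`. -/
def IsReducedWord (n : ℕ) (w : Equiv.Perm (Fin n)) (l : List ℕ) : Prop :=
  (∀ i ∈ l, 1 ≤ i ∧ i < n) ∧ wordProd n l = w ∧ l.length = len n w

/-- Bruhat-Chevalley order: `x ≤ w` iff every reduced word for `w` contains a
subword whose product is `x`. -/
def Bruhat (n : ℕ) (x w : Equiv.Perm (Fin n)) : Prop :=
  ∀ l, IsReducedWord n w l → ∃ t, t.Sublist l ∧ wordProd n t = x

/-- `w` is 321-avoiding: no `i < j < k` with `w i > w j > w k`. -/
def Avoids321 (n : ℕ) (w : Equiv.Perm (Fin n)) : Prop :=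
  ¬ ∃ i j k : Fin n, i < j ∧ j < k ∧ w j < w i ∧ w k < w j

/-- Product of the subword of `l` selected by the mask `S` (set of selected positions). -/
def maskProd (n : ℕ) (l : List ℕ) (S : Finset ℕ) : Equiv.Perm (Fin n) :=
  wordProd n (((List.range l.length).filter (fun j => decide (j ∈ S))).map (fun j => l.getD j 0))

/-- Position `j` of the word `l` is a defect of the mask `S`. -/
noncomputable def IsDefect (n : ℕ) (l : List ℕ) (S : Finset ℕ) (j : ℕ) : Prop :=
  len n (maskProd n (l.take j) S * gen n (l.getD j 0)) < len n (maskProd n (l.take j) S)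

/-- The defect set `D(σ)` of the mask `S` on the word `l`. -/
noncomputable def defectSet (n : ℕ) (l : List ℕ) (S : Finset ℕ) : Finset ℕ :=
  (Finset.range l.length).filter (fun j =>
    len n (maskProd n (l.take j) S * gen n (l.getD j 0)) < len n (maskProd n (l.take j) S))

/-- Deodhar's defect generating polynomial `P_x(a) = Σ_{σ : π(w^σ) = x} q^{|D(σ)|}`. -/
noncomputable def defPoly (n : ℕ) (l : List ℕ) (x : Equiv.Perm (Fin n)) : Polynomial ℤ :=
  ∑ S ∈ (Finset.range l.length).powerset,
    if maskProd n l S = x then (X : Polynomial ℤ) ^ (defectSet n l S).card else 0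


/-- The mask on a word of length `r` that deselects exactly positions `p+1` and `p+2`. -/
def braidMask (r p : ℕ) : Finset ℕ := ((Finset.range r).erase (p + 1)).erase (p + 2)

/-! Along the mask, a selected letter changes the length of the running product by exactly one,
and it lowers it precisely at a selected defect, so `ℓ(π(w^σ)) + 2 |D(σ) ∩ σ| = #{j : σ_j = 1}`.
For the braid mask the two zeros are the letters `s_{i±1}` and the second `s_i`: the first is no
defect because `v s_i s_{i±1}` is reduced, the second is one because `v s_i · s_i = v` is shorter
than `v s_i`. Hence `|D(σ)| = |D(σ) ∩ σ| + 1` and `ℓ(π(w^σ)) + 2 |D(σ)| = ℓ(w)`. -/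

section Length

variable {n : ℕ}

lemma gen_mul_self (c : ℕ) : gen n c * gen n c = 1 := by
  unfold gen
  split
  · exact Equiv.swap_mul_self _ _
  · simp

lemma sign_gen {c : ℕ} (hc : 1 ≤ c ∧ c < n) : Equiv.Perm.sign (gen n c) = -1 := by
  rw [gen, dif_pos hc, Equiv.Perm.sign_swap]
  simp only [ne_eq, Fin.mk.injEq]
  omega

@[simp]
lemma wordProd_nil : wordProd n [] = 1 := rfl

@[simp]
lemma wordProd_cons (c : ℕ) (l : List ℕ) : wordProd n (c :: l) = gen n c * wordProd n l := by
  simp [wordProd]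

@[simp]
lemma wordProd_append (a b : List ℕ) : wordProd n (a ++ b) = wordProd n a * wordProd n b := by
  simp [wordProd]

lemma sign_wordProd {l : List ℕ} (hl : ∀ i ∈ l, 1 ≤ i ∧ i < n) :
    Equiv.Perm.sign (wordProd n l) = (-1) ^ l.length := by
  induction l with
  | nil => simp
  | cons c l ih =>
    rw [wordProd_cons, map_mul, sign_gen (hl c (by simp)), ih (fun k hk => hl k (by simp [hk])),
      List.length_cons, pow_succ']

lemma len_le_length {l : List ℕ} (hl : ∀ i ∈ l, 1 ≤ i ∧ i < n) :
    len n (wordProd n l) ≤ l.length :=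
  Nat.sInf_le ⟨l, hl, rfl, rfl⟩

lemma exists_isReducedWord {l : List ℕ} (hl : ∀ i ∈ l, 1 ≤ i ∧ i < n) :
    ∃ t, IsReducedWord n (wordProd n l) t := by
  have hne : {r | ∃ t : List ℕ, (∀ i ∈ t, 1 ≤ i ∧ i < n) ∧ wordProd n t = wordProd n l ∧
      t.length = r}.Nonempty := ⟨l.length, l, hl, rfl, rfl⟩
  exact Nat.sInf_mem hne

lemma neg_one_pow_len_wordProd {l : List ℕ} (hl : ∀ i ∈ l, 1 ≤ i ∧ i < n) :
    ((-1 : ℤˣ)) ^ len n (wordProd n l) = (-1) ^ l.length := by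
  obtain ⟨t, ht, hte, htl⟩ := exists_isReducedWord hl
  rw [← htl, ← sign_wordProd ht, hte, sign_wordProd hl]

/-- Right multiplication by a simple transposition changes the length by exactly one: by at most
one since `gen n c` is an involution, and not by zero since it flips the sign. -/
lemma len_mul_gen {l : List ℕ} {c : ℕ} (hl : ∀ i ∈ l, 1 ≤ i ∧ i < n) (hc : 1 ≤ c ∧ c < n) :
    len n (wordProd n l * gen n c) = len n (wordProd n l) + 1 ∨
      len n (wordProd n l * gen n c) + 1 = len n (wordProd n l) := by
  obtain ⟨t, ht, hte, htl⟩ := exists_isReducedWord hl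
  have hlc : ∀ i ∈ l ++ [c], 1 ≤ i ∧ i < n :=
    List.forall_mem_append.2 ⟨hl, List.forall_mem_singleton.2 hc⟩
  have htc : ∀ i ∈ t ++ [c], 1 ≤ i ∧ i < n :=
    List.forall_mem_append.2 ⟨ht, List.forall_mem_singleton.2 hc⟩
  have hup : len n (wordProd n l * gen n c) ≤ len n (wordProd n l) + 1 := by
    simpa [hte, htl] using len_le_length htc
  have hdown : len n (wordProd n l) ≤ len n (wordProd n l * gen n c) + 1 := by
    obtain ⟨s, hs, hse, hsl⟩ := exists_isReducedWord hlc
    have hsc : ∀ i ∈ s ++ [c], 1 ≤ i ∧ i < n :=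
      List.forall_mem_append.2 ⟨hs, List.forall_mem_singleton.2 hc⟩
    simpa [hse, hsl, mul_assoc, gen_mul_self] using len_le_length hsc
  have hsign : len n (wordProd n l * gen n c) ≠ len n (wordProd n l) := by
    intro h
    have := neg_one_pow_len_wordProd hlc
    rw [wordProd_append, wordProd_cons, wordProd_nil, mul_one, h, neg_one_pow_len_wordProd hl,
      List.length_append, List.length_singleton, pow_succ] at this
    simp at this
  omega

lemma len_wordProd_of_isReducedWord_append {w : Equiv.Perm (Fin n)} {t u : List ℕ}
    (h : IsReducedWord n w (t ++ u)) : len n (wordProd n t) = t.length := by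
  obtain ⟨hv, hw, hlen⟩ := h
  have ht : ∀ i ∈ t, 1 ≤ i ∧ i < n := fun k hk => hv k (List.mem_append_left u hk)
  have hu : ∀ i ∈ u, 1 ≤ i ∧ i < n := fun k hk => hv k (List.mem_append_right t hk)
  obtain ⟨s, hs, hse, hsl⟩ := exists_isReducedWord ht
  have hsu : ∀ i ∈ s ++ u, 1 ≤ i ∧ i < n := List.forall_mem_append.2 ⟨hs, hu⟩
  have hshort := len_le_length hsu
  rw [wordProd_append, hse, ← wordProd_append, hw, ← hlen, List.length_append,
    List.length_append, hsl] at hshort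
  have hlong := len_le_length ht
  omega

end Length

section Mask

variable {n : ℕ}

lemma maskProd_append_singleton (l : List ℕ) (c : ℕ) (S : Finset ℕ) :
    maskProd n (l ++ [c]) S =
      if l.length ∈ S then maskProd n l S * gen n c else maskProd n l S := by
  have hget : ∀ j ∈ (List.range l.length).filter (fun j => decide (j ∈ S)),
      (l ++ [c]).getD j 0 = l.getD j 0 := by
    intro j hj
    have : j < l.length := by simpa using (List.mem_filter.1 hj).1
    simp [List.getD, List.getElem?_append_left this]
  unfold maskProd
  rw [List.length_append, List.length_singleton, List.range_succ, List.filter_append,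
    List.map_append, List.map_congr_left hget, wordProd_append]
  split_ifs with h <;> simp [h, wordProd]

lemma exists_subset_wordProd_eq_maskProd (l : List ℕ) (S : Finset ℕ) :
    ∃ t ⊆ l, wordProd n t = maskProd n l S := by
  induction l using List.reverseRecOn with
  | nil => exact ⟨[], List.Subset.refl _, rfl⟩
  | append_singleton l c ih =>
    obtain ⟨t, ht, hte⟩ := ih
    rw [maskProd_append_singleton]
    split_ifs
    · refine ⟨t ++ [c], List.append_subset.2
        ⟨List.subset_append_of_subset_left [c] ht, List.subset_append_right l [c]⟩, ?_⟩
      rw [wordProd_append, hte]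
      simp [wordProd]
    · exact ⟨t, List.subset_append_of_subset_left [c] ht, hte⟩

lemma maskProd_eq_wordProd {l : List ℕ} {S : Finset ℕ} (h : ∀ j < l.length, j ∈ S) :
    maskProd n l S = wordProd n l := by
  induction l using List.reverseRecOn with
  | nil => rfl
  | append_singleton l c ih =>
    have hS : ∀ j < l.length, j ∈ S := fun j hj => h j (by rw [List.length_append]; omega)
    rw [maskProd_append_singleton, if_pos (h _ (by simp)), ih hS]
    simp [wordProd]

lemma mem_defectSet_iff {l : List ℕ} {S : Finset ℕ} {j : ℕ} :
    j ∈ defectSet n l S ↔ j < l.length ∧ IsDefect n l S j := by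
  simp [defectSet, IsDefect]

lemma isDefect_append_cons (t u : List ℕ) (c : ℕ) (S : Finset ℕ) :
    IsDefect n (t ++ c :: u) S t.length ↔
      len n (maskProd n t S * gen n c) < len n (maskProd n t S) := by
  simp [IsDefect, List.getD]

lemma defectSet_append_singleton (l : List ℕ) (c : ℕ) (S : Finset ℕ) :
    defectSet n (l ++ [c]) S =
      if len n (maskProd n l S * gen n c) < len n (maskProd n l S) then
        insert l.length (defectSet n l S)
      else defectSet n l S := by
  have hold : ∀ j ∈ Finset.range l.length, (IsDefect n (l ++ [c]) S j ↔ IsDefect n l S j) := by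
    intro j hj
    have hj : j < l.length := Finset.mem_range.1 hj
    simp [IsDefect, List.take_append, hj.le, List.getD, List.getElem_append_left hj,
      List.getElem?_eq_getElem hj]
  have hlast : IsDefect n (l ++ [c]) S l.length ↔
      len n (maskProd n l S * gen n c) < len n (maskProd n l S) :=
    isDefect_append_cons l [] c S
  unfold IsDefect at hold hlast
  unfold defectSet
  rw [List.length_append, List.length_singleton, Finset.range_add_one, Finset.filter_insert,
    Finset.filter_congr hold]
  simp only [hlast]

lemma len_maskProd_add_two_mul_card_defectSet {l : List ℕ} (S : Finset ℕ)
    (hl : ∀ i ∈ l, 1 ≤ i ∧ i < n) :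
    len n (maskProd n l S) + 2 * ((defectSet n l S).filter (· ∈ S)).card =
      ((Finset.range l.length).filter (· ∈ S)).card := by
  induction l using List.reverseRecOn with
  | nil => simp [maskProd, len, defectSet]
  | append_singleton l c ih =>
    obtain ⟨hl, hc⟩ := List.forall_mem_append.1 hl
    replace hc := List.forall_mem_singleton.1 hc
    have ih := ih hl
    obtain ⟨t, hsub, ht⟩ := exists_subset_wordProd_eq_maskProd (n := n) l S
    have hstep := ht ▸ len_mul_gen (fun i hi => hl i (hsub hi)) hc
    have hcardD : (insert l.length ((defectSet n l S).filter (· ∈ S))).card =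
        ((defectSet n l S).filter (· ∈ S)).card + 1 :=
      Finset.card_insert_of_notMem (by simp [defectSet])
    have hcardR : (insert l.length ((Finset.range l.length).filter (· ∈ S))).card =
        ((Finset.range l.length).filter (· ∈ S)).card + 1 :=
      Finset.card_insert_of_notMem (by simp)
    rw [maskProd_append_singleton, defectSet_append_singleton, List.length_append,
      List.length_singleton, Finset.range_add_one, Finset.filter_insert]
    by_cases hS : l.length ∈ S <;>
      by_cases hd : len n (maskProd n l S * gen n c) < len n (maskProd n l S) <;>
      simp only [hS, hd, if_true, if_false, Finset.filter_insert, hcardD, hcardR] <;>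
      omega

end Mask

section BraidMask

lemma mem_braidMask {r p k : ℕ} : k ∈ braidMask r p ↔ k < r ∧ k ≠ p + 1 ∧ k ≠ p + 2 := by
  simp only [braidMask, Finset.mem_erase, Finset.mem_range]
  tauto

lemma range_filter_not_mem_braidMask {r p : ℕ} (h : p + 2 < r) :
    (Finset.range r).filter (· ∉ braidMask r p) = {p + 1, p + 2} := by
  ext k
  simp only [Finset.mem_filter, Finset.mem_range, mem_braidMask, Finset.mem_insert,
    Finset.mem_singleton]
  omega

variable {n : ℕ} {w : Equiv.Perm (Fin n)} {v v' : List ℕ} {a b : ℕ}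

lemma defectSet_filter_not_mem_braidMask (hl : IsReducedWord n w (v ++ a :: b :: a :: v')) :
    (defectSet n (v ++ a :: b :: a :: v')
        (braidMask (v ++ a :: b :: a :: v').length v.length)).filter
      (· ∉ braidMask (v ++ a :: b :: a :: v').length v.length) = {v.length + 2} := by
  set S := braidMask (v ++ a :: b :: a :: v').length v.length with hS
  have hmask : maskProd n (v ++ [a]) S = wordProd n (v ++ [a]) :=
    maskProd_eq_wordProd fun j hj => by
      simp only [List.length_append, List.length_singleton] at hj
      simp only [hS, mem_braidMask, List.length_append, List.length_cons]
      omega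
  have hmask' : maskProd n (v ++ [a, b]) S = wordProd n (v ++ [a]) := by
    rw [show v ++ [a, b] = (v ++ [a]) ++ [b] by simp, maskProd_append_singleton,
      if_neg (by simp [hS, mem_braidMask]), hmask]
  have hlen : len n (wordProd n v) = v.length :=
    len_wordProd_of_isReducedWord_append hl
  have hlen₁ : len n (wordProd n (v ++ [a])) = v.length + 1 := by
    simpa using len_wordProd_of_isReducedWord_append (t := v ++ [a]) (by simpa using hl)
  have hlen₂ : len n (wordProd n (v ++ [a, b])) = v.length + 2 := by
    simpa using len_wordProd_of_isReducedWord_append (t := v ++ [a, b]) (by simpa using hl)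
  have hnot : v.length + 1 ∉ defectSet n (v ++ a :: b :: a :: v') S := by
    rw [mem_defectSet_iff, show v ++ a :: b :: a :: v' = (v ++ [a]) ++ b :: a :: v' by simp,
      show v.length + 1 = (v ++ [a]).length by simp, isDefect_append_cons, hmask,
      show wordProd n (v ++ [a]) * gen n b = wordProd n (v ++ [a, b]) by simp [mul_assoc],
      hlen₁, hlen₂]
    omega
  have hdef : v.length + 2 ∈ defectSet n (v ++ a :: b :: a :: v') S := by
    rw [mem_defectSet_iff, show v ++ a :: b :: a :: v' = (v ++ [a, b]) ++ a :: v' by simp,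
      show v.length + 2 = (v ++ [a, b]).length by simp, isDefect_append_cons, hmask',
      show wordProd n (v ++ [a]) * gen n a = wordProd n v by simp [mul_assoc, gen_mul_self],
      hlen, hlen₁]
    simp
  ext j
  simp only [Finset.mem_filter, Finset.mem_singleton]
  constructor
  · rintro ⟨hj, hjS⟩
    have hzero : j ∈ (Finset.range (v ++ a :: b :: a :: v').length).filter (· ∉ S) :=
      Finset.mem_filter.2 ⟨Finset.mem_range.2 (mem_defectSet_iff.1 hj).1, hjS⟩
    rw [hS, range_filter_not_mem_braidMask (by simp)] at hzero
    rcases Finset.mem_insert.1 hzero with rfl | h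
    · exact absurd hj hnot
    · exact Finset.mem_singleton.1 h
  · rintro rfl
    exact ⟨hdef, by simp [hS, mem_braidMask]⟩

lemma len_maskProd_braidMask_add_two_mul_card_defectSet
    (hl : IsReducedWord n w (v ++ a :: b :: a :: v')) :
    len n (maskProd n (v ++ a :: b :: a :: v')
        (braidMask (v ++ a :: b :: a :: v').length v.length)) +
      2 * (defectSet n (v ++ a :: b :: a :: v')
        (braidMask (v ++ a :: b :: a :: v').length v.length)).card =
      (v ++ a :: b :: a :: v').length := by
  set l := v ++ a :: b :: a :: v' with hl_def
  set S := braidMask l.length v.length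
  have hr : v.length + 2 < l.length := by simp [hl_def]
  have hdeodhar := len_maskProd_add_two_mul_card_defectSet S hl.1
  have hdefects := Finset.card_filter_add_card_filter_not (s := defectSet n l S) (· ∈ S)
  have hletters := Finset.card_filter_add_card_filter_not (s := Finset.range l.length) (· ∈ S)
  rw [defectSet_filter_not_mem_braidMask hl, Finset.card_singleton] at hdefects
  rw [range_filter_not_mem_braidMask hr, Finset.card_pair (by omega),
    Finset.card_range] at hletters
  omega

end BraidMask

theorem stmt11_general (n : ℕ) (w : Equiv.Perm (Fin n)) (v v' : List ℕ) (i i' : ℕ)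
    (hl : IsReducedWord n w (v ++ i :: i' :: i :: v')) :
    ((defectSet n (v ++ i :: i' :: i :: v')
          (braidMask (v ++ i :: i' :: i :: v').length v.length)).filter
        (fun j => j ∉ braidMask (v ++ i :: i' :: i :: v').length v.length)).card = 1 ∧
    ((Finset.range (v ++ i :: i' :: i :: v').length).filter
        (fun j => j ∉ braidMask (v ++ i :: i' :: i :: v').length v.length)).card = 2 ∧
    ((len n w : ℚ) -
        (len n (maskProd n (v ++ i :: i' :: i :: v')
          (braidMask (v ++ i :: i' :: i :: v').length v.length)) : ℚ) - 1) / 2 <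
      ((defectSet n (v ++ i :: i' :: i :: v')
          (braidMask (v ++ i :: i' :: i :: v').length v.length)).card : ℚ) := by
  refine ⟨by rw [defectSet_filter_not_mem_braidMask hl, Finset.card_singleton],
    by rw [range_filter_not_mem_braidMask (by simp), Finset.card_pair (by omega)], ?_⟩
  have hformula : (len n (maskProd n (v ++ i :: i' :: i :: v')
        (braidMask (v ++ i :: i' :: i :: v').length v.length)) : ℚ) +
      2 * (defectSet n (v ++ i :: i' :: i :: v')
        (braidMask (v ++ i :: i' :: i :: v').length v.length)).card = len n w := by
    rw [← hl.2.2]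
    exact_mod_cast len_maskProd_braidMask_add_two_mul_card_defectSet hl
  linarith

/-- for a non-321-avoiding `w` with reduced word `v s_i s_{i±1} s_i v'`, the
mask selecting everything except the middle `s_{i±1}` and the second `s_i` has exactly one
0-defect and exactly two zeros, hence `Δ_σ < 0`, i.e. `|D(σ)| > (ℓ(w) - ℓ(π(w^σ)) - 1)/2`. -/
theorem stmt11 (n : ℕ) (w : Equiv.Perm (Fin n)) (v v' : List ℕ) (i i' : ℕ)
    (hbraid : i' = i + 1 ∨ i = i' + 1)
    (hl : IsReducedWord n w (v ++ i :: i' :: i :: v')) :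
    ((defectSet n (v ++ i :: i' :: i :: v')
          (braidMask (v ++ i :: i' :: i :: v').length v.length)).filter
        (fun j => j ∉ braidMask (v ++ i :: i' :: i :: v').length v.length)).card = 1 ∧
    ((Finset.range (v ++ i :: i' :: i :: v').length).filter
        (fun j => j ∉ braidMask (v ++ i :: i' :: i :: v').length v.length)).card = 2 ∧
    ((len n w : ℚ) -
        (len n (maskProd n (v ++ i :: i' :: i :: v')
          (braidMask (v ++ i :: i' :: i :: v').length v.length)) : ℚ) - 1) / 2 <
      ((defectSet n (v ++ i :: i' :: i :: v')
          (braidMask (v ++ i :: i' :: i :: v').length v.length)).card : ℚ) :=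
  stmt11_general n w v v' i i' hl
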